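/- arXiv:math/0403487 — 3 statements merged into one kernel-verified Lean document; each statement's English description precedes it below -/
import Mathlib

section
/- Let 𝔽 be a field and q a prime power with Frobenius map x ↦ x^q. Suppose a₀, b₀, c₀, d₀ ∈ 𝔽 satisfy d₀·a₀^q - b₀·c₀^q = 1, a₀·c₀^q = c₀·a₀^q, and a₀·d₀ - b₀·c₀ = 1. Then a₀^q = a₀ and c₀^q = c₀. -/
/-- From `d₀a₀^q - b₀c₀^q = 1`, `a₀c₀^q = c₀a₀^q` and `a₀d₀ - b₀c₀ = 1` one deduces
`a₀^q = a₀` and `c₀^q = c₀`, where `x ↦ x^q` is the `q`-power Frobenius. -/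
theorem stmt2 (F : Type*) [Field F] [IsAlgClosed F] (p : ℕ) [Fact p.Prime] [CharP F p]
    (n : ℕ) (hn : 0 < n) (q : ℕ) (hq : q = p ^ n)
    (a₀ b₀ c₀ d₀ : F)
    (h1 : d₀ * a₀ ^ q - b₀ * c₀ ^ q = 1)
    (h2 : a₀ * c₀ ^ q = c₀ * a₀ ^ q)
    (h3 : a₀ * d₀ - b₀ * c₀ = 1) :
    a₀ ^ q = a₀ ∧ c₀ ^ q = c₀ := by
  have ha : a₀ ^ q = a₀ := by
    linear_combination a₀ * h1 + b₀ * h2 - a₀ ^ q * h3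
  refine ⟨ha, ?_⟩
  by_cases hb : b₀ = 0
  · have had : a₀ * d₀ = 1 := by linear_combination h3 + c₀ * hb
    linear_combination d₀ * h2 + d₀ * c₀ * ha - (c₀ ^ q - c₀) * had
  · have h : b₀ * (c₀ ^ q - c₀) = 0 := by
      linear_combination h3 - h1 + d₀ * ha
    rcases mul_eq_zero.mp h with h | h
    · exact absurd h hb
    · exact sub_eq_zero.mp h
end

section
/- Let 𝔽 be a field of characteristic p with q a power of p. Suppose a₀, c₀, a₁, c₁, b₀, d₀ ∈ 𝔽 satisfy a₀^q = a₀, c₀^q = c₀, a₀·d₀ - b₀·c₀ = 1, d₀·(a₁^q - a₁) = b₀·(c₁^q - c₁), and a₀·(c₁^q - c₁) = c₀·(a₁^q - a₁). Then a₁^q = a₁ and c₁^q = c₁. -/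
/-- The step deducing `a₁, c₁ ∈ 𝔽_q` from the system in Section 4. -/
theorem stmt3 (F : Type*) [Field F] (p : ℕ) [Fact p.Prime] [CharP F p]
    (n : ℕ) (hn : 0 < n) (q : ℕ) (hq : q = p ^ n)
    (a₀ c₀ a₁ c₁ b₀ d₀ : F)
    (ha₀ : a₀ ^ q = a₀) (hc₀ : c₀ ^ q = c₀)
    (hdet : a₀ * d₀ - b₀ * c₀ = 1)
    (h1 : d₀ * (a₁ ^ q - a₁) = b₀ * (c₁ ^ q - c₁))
    (h2 : a₀ * (c₁ ^ q - c₁) = c₀ * (a₁ ^ q - a₁)) :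
    a₁ ^ q = a₁ ∧ c₁ ^ q = c₁ := by
  constructor
  · linear_combination -(a₁ ^ q - a₁) * hdet + a₀ * h1 + b₀ * h2
  · linear_combination -(c₁ ^ q - c₁) * hdet + c₀ * h1 + d₀ * h2
end

section
/- Let 𝔽 be an algebraically closed field of odd characteristic with Frobenius x ↦ x^q. Define Y_L ⊆ 𝔽⁶ as the set of (a₀, c₀, a₁, c₁, f₁, f₂) with a₀^q = a₀, c₀^q = c₀, a₁^q = a₁, c₁^q = c₁, 2(c₀a₁ - c₁a₀) = 1, f₁^q - f₁ = 1, f₂^q = f₂. Then the map (a₀, c₀, a₁, c₁, a₂, c₂) ↦ (a₀, c₀, a₁, c₁, a₀c₂ - c₀a₂, a₁c₂ - c₁a₂) gives a bijection from the set of (a₀,c₀,a₁,c₁,a₂,c₂) ∈ 𝔽⁶ satisfying a₀^q=a₀, c₀^q=c₀, a₁^q=a₁, c₁^q=c₁, 2(c₀a₁-c₁a₀)=1, a₀(c₂^q-c₂)-c₀(a₂^q-a₂)=1, a₁(c₂^q-c₂)=c₁(a₂^q-a₂), onto Y_L. -/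
/-- The coordinate change `f₁ = a₀c₂ - c₀a₂`, `f₂ = a₁c₂ - c₁a₂` gives a bijection
onto the variety `Y_L`. -/
theorem stmt12 (F : Type*) [Field F] [IsAlgClosed F] (p : ℕ) [Fact p.Prime] [CharP F p]
    (hp : p ≠ 2) (n : ℕ) (hn : 0 < n) (q : ℕ) (hq : q = p ^ n) :
    Set.BijOn
      (fun v : F × F × F × F × F × F =>
        (v.1, v.2.1, v.2.2.1, v.2.2.2.1,
          v.1 * v.2.2.2.2.2 - v.2.1 * v.2.2.2.2.1,
          v.2.2.1 * v.2.2.2.2.2 - v.2.2.2.1 * v.2.2.2.2.1))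
      {v : F × F × F × F × F × F |
        v.1 ^ q = v.1 ∧ v.2.1 ^ q = v.2.1 ∧ v.2.2.1 ^ q = v.2.2.1 ∧
        v.2.2.2.1 ^ q = v.2.2.2.1 ∧
        2 * (v.2.1 * v.2.2.1 - v.2.2.2.1 * v.1) = 1 ∧
        v.1 * (v.2.2.2.2.2 ^ q - v.2.2.2.2.2) -
          v.2.1 * (v.2.2.2.2.1 ^ q - v.2.2.2.2.1) = 1 ∧
        v.2.2.1 * (v.2.2.2.2.2 ^ q - v.2.2.2.2.2) =
          v.2.2.2.1 * (v.2.2.2.2.1 ^ q - v.2.2.2.2.1)}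
      {v : F × F × F × F × F × F |
        v.1 ^ q = v.1 ∧ v.2.1 ^ q = v.2.1 ∧ v.2.2.1 ^ q = v.2.2.1 ∧
        v.2.2.2.1 ^ q = v.2.2.2.1 ∧
        2 * (v.2.1 * v.2.2.1 - v.2.2.2.1 * v.1) = 1 ∧
        v.2.2.2.2.1 ^ q - v.2.2.2.2.1 = 1 ∧
        v.2.2.2.2.2 ^ q = v.2.2.2.2.2} := by

  subst hq
  have h2q : (2 : F) ^ (p ^ n) = 2 := by
    have := map_natCast (iterateFrobenius F p n) 2
    rwa [iterateFrobenius_def, Nat.cast_ofNat] at this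
  constructor
  · rintro ⟨a₀, c₀, a₁, c₁, a₂, c₂⟩ ⟨h1, h2, h3, h4, h5, h6, h7⟩
    refine ⟨h1, h2, h3, h4, h5, ?_, ?_⟩
    · show (a₀ * c₂ - c₀ * a₂) ^ (p ^ n) - (a₀ * c₂ - c₀ * a₂) = 1
      rw [sub_pow_char_pow, mul_pow, mul_pow, h1, h2]
      linear_combination h6
    · show (a₁ * c₂ - c₁ * a₂) ^ (p ^ n) = (a₁ * c₂ - c₁ * a₂)
      rw [sub_pow_char_pow, mul_pow, mul_pow, h3, h4]
      linear_combination h7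
  constructor
  · rintro ⟨a₀, c₀, a₁, c₁, a₂, c₂⟩ ⟨h1, h2, h3, h4, h5, h6, h7⟩
      ⟨b₀, d₀, b₁, d₁, b₂, d₂⟩ ⟨g1, g2, g3, g4, g5, g6, g7⟩ heq
    simp only [Prod.mk.injEq] at heq ⊢
    obtain ⟨e1, e2, e3, e4, e5, e6⟩ := heq
    subst e1 e2 e3 e4
    refine ⟨rfl, rfl, rfl, rfl, ?_, ?_⟩
    · linear_combination 2*a₀*e6 - 2*a₁*e5 + (b₂ - a₂)*h5
    · linear_combination 2*c₀*e6 - 2*c₁*e5 + (d₂ - c₂)*h5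
  · rintro ⟨a₀, c₀, a₁, c₁, f₁, f₂⟩ ⟨h1, h2, h3, h4, h5, h6, h7⟩
    refine ⟨(a₀, c₀, a₁, c₁, 2*(a₀*f₂ - a₁*f₁), 2*(c₀*f₂ - c₁*f₁)), ?_, ?_⟩
    · have ha : (2*(a₀*f₂ - a₁*f₁)) ^ (p ^ n) = 2*(a₀*f₂ - a₁*(f₁+1)) := by
        rw [mul_pow, h2q, sub_pow_char_pow, mul_pow, mul_pow, h1, h3, h7]
        have : f₁ ^ (p ^ n) = f₁ + 1 := by linear_combination h6
        rw [this]
      have hc : (2*(c₀*f₂ - c₁*f₁)) ^ (p ^ n) = 2*(c₀*f₂ - c₁*(f₁+1)) := by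
        rw [mul_pow, h2q, sub_pow_char_pow, mul_pow, mul_pow, h2, h4, h7]
        have : f₁ ^ (p ^ n) = f₁ + 1 := by linear_combination h6
        rw [this]
      refine ⟨h1, h2, h3, h4, h5, ?_, ?_⟩
      · show a₀ * ((2*(c₀*f₂ - c₁*f₁)) ^ (p ^ n) - 2*(c₀*f₂ - c₁*f₁)) -
          c₀ * ((2*(a₀*f₂ - a₁*f₁)) ^ (p ^ n) - 2*(a₀*f₂ - a₁*f₁)) = 1
        rw [ha, hc]; linear_combination h5
      · show a₁ * ((2*(c₀*f₂ - c₁*f₁)) ^ (p ^ n) - 2*(c₀*f₂ - c₁*f₁)) =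
          c₁ * ((2*(a₀*f₂ - a₁*f₁)) ^ (p ^ n) - 2*(a₀*f₂ - a₁*f₁))
        rw [ha, hc]; ring
    · simp only [Prod.mk.injEq]
      refine ⟨trivial, trivial, trivial, trivial, ?_, ?_⟩
      · linear_combination f₁*h5
      · linear_combination f₂*h5
end
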